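/- Let ρ(u,z) = |u|^{1/2} + Σ_{i=1}^n |z_i|^{1/(2i-1)} and let d*((s,x),(t,y)) := ρ(t−s, x − θ_{s,t}(y)), d((s,x),(t,y)) := ρ(t−s, θ_{t,s}(x) − y), where θ is the flow of a vector field F with strict cascade (subdiagonal) structure: F_1(t,x) = F_1(t,x_1) and F_i(t,x) = F_i(t, x_{i-1}, x_i) for i ∈ [2,n], F Lipschitz uniformly in time. Then there exists C = C(F,T,n,d) ≥ 1 such that for ALL (s,x),(t,y) ∈ [−T,T] × ℝ^{nd} (with no smallness restriction on the distance), C^{-1} d*((s,x),(t,y)) ≤ d((s,x),(t,y)) ≤ C d*((s,x),(t,y)). -/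

import Mathlib

open scoped BigOperators

/-- Euclidean norm of the i-th d-dimensional block of z ∈ ℝ^{nd}. -/
noncomputable def blockNorm (n d : ℕ) (z : EuclideanSpace ℝ (Fin n × Fin d)) (i : Fin n) : ℝ :=
  Real.sqrt (∑ q : Fin d, (z (i, q)) ^ 2)

/-- The parabolic quasi-norm ρ(u,z) = |u|^{1/2} + Σ_{i=1}^n |z_i|^{1/(2i-1)}. -/
noncomputable def rho (n d : ℕ) (u : ℝ) (z : EuclideanSpace ℝ (Fin n × Fin d)) : ℝ :=
  |u| ^ ((1:ℝ)/2) + ∑ i : Fin n, blockNorm n d z i ^ ((1:ℝ) / (2 * (i:ℕ) + 1))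

/-!
For two trajectories of the cascade field, with `δ = γ₁ - γ₂` and `h = |u - t|`, one has
`|δ_i(u)| ≤ C ∑_{k ≤ i} h^(i-k) |δ_k(t)|`. Indeed, block `k` of `F` only sees blocks `k - 1`
and `k`, so the Euclidean norm of the rescaled vector `(h^(i-k) δ_k)_{k ≤ i}` grows at rate at
most `C (1 + 1/h)`, and Gronwall over a time interval of length `h` loses a bounded factor.
Since `h ≤ ρ²` and `|δ_k| ≤ ρ^(2k+1)`, every term `h^(i-k) |δ_k|` is at most `ρ^(2i+1)`, which
gives `ρ(u - t, δ(u)) ≤ C ρ(u - t, δ(t))`. Applied to the trajectories through `(s, x)` and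
`(t, y)`, from `t` to `s` and from `s` to `t`, this yields both inequalities without ever
inverting the flow.
-/

open Finset

section Blocks

variable {n d : ℕ}

lemma blockNorm_nonneg (z : EuclideanSpace ℝ (Fin n × Fin d)) (k : Fin n) :
    0 ≤ blockNorm n d z k :=
  Real.sqrt_nonneg _

lemma norm_eq_sqrt_sum_blockNorm_sq (z : EuclideanSpace ℝ (Fin n × Fin d)) :
    ‖z‖ = Real.sqrt (∑ k, blockNorm n d z k ^ 2) := by
  rw [EuclideanSpace.norm_eq, Fintype.sum_prod_type]
  congr 1
  refine sum_congr rfl fun k _ => ?_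
  rw [blockNorm, Real.sq_sqrt (sum_nonneg fun q _ => sq_nonneg _)]
  simp only [Real.norm_eq_abs, sq_abs]

lemma blockNorm_le_norm (z : EuclideanSpace ℝ (Fin n × Fin d)) (k : Fin n) :
    blockNorm n d z k ≤ ‖z‖ := by
  rw [norm_eq_sqrt_sum_blockNorm_sq, ← Real.sqrt_sq (blockNorm_nonneg z k)]
  exact Real.sqrt_le_sqrt <|
    single_le_sum (f := fun k => blockNorm n d z k ^ 2) (fun _ _ => sq_nonneg _) (mem_univ k)

lemma norm_le_sum_blockNorm (z : EuclideanSpace ℝ (Fin n × Fin d)) :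
    ‖z‖ ≤ ∑ k, blockNorm n d z k := by
  rw [norm_eq_sqrt_sum_blockNorm_sq]
  exact (Real.sqrt_le_left (sum_nonneg fun k _ => blockNorm_nonneg z k)).2
    (sum_sq_le_sq_sum_of_nonneg fun k _ => blockNorm_nonneg z k)

noncomputable def blockScale (w : Fin n → ℝ) :
    EuclideanSpace ℝ (Fin n × Fin d) →L[ℝ] EuclideanSpace ℝ (Fin n × Fin d) :=
  LinearMap.toContinuousLinearMap
    { toFun := fun z => WithLp.toLp 2 fun p => w p.1 * z p
      map_add' := fun a b => by ext p; simp [mul_add]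
      map_smul' := fun c a => by ext p; simp [mul_left_comm] }

@[simp] lemma blockScale_apply (w : Fin n → ℝ) (z : EuclideanSpace ℝ (Fin n × Fin d))
    (p : Fin n × Fin d) : blockScale w z p = w p.1 * z p :=
  rfl

lemma blockNorm_blockScale (w : Fin n → ℝ) (z : EuclideanSpace ℝ (Fin n × Fin d)) (k : Fin n) :
    blockNorm n d (blockScale w z) k = |w k| * blockNorm n d z k := by
  simp only [blockNorm, blockScale_apply, mul_pow, ← mul_sum]
  rw [Real.sqrt_mul (sq_nonneg _), Real.sqrt_sq_eq_abs]

lemma norm_blockScale_le {w : Fin n → ℝ} (hw : ∀ k, 0 ≤ w k)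
    (z : EuclideanSpace ℝ (Fin n × Fin d)) :
    ‖blockScale w z‖ ≤ ∑ k, w k * blockNorm n d z k :=
  (norm_le_sum_blockNorm _).trans_eq <| sum_congr rfl fun k _ => by
    rw [blockNorm_blockScale, abs_of_nonneg (hw k)]

end Blocks

section Cascade

variable {n d : ℕ} {κ : NNReal}
  {F : ℝ → EuclideanSpace ℝ (Fin n × Fin d) → EuclideanSpace ℝ (Fin n × Fin d)}

def cascadeNbhd (k : Fin n) : Finset (Fin n) :=
  univ.filter fun j => (j : ℕ) = k ∨ (j : ℕ) + 1 = k

def IsSubdiagonalCascade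
    (F : ℝ → EuclideanSpace ℝ (Fin n × Fin d) → EuclideanSpace ℝ (Fin n × Fin d)) : Prop :=
  ∀ (t : ℝ) (a b : EuclideanSpace ℝ (Fin n × Fin d)) (k : Fin n),
    (∀ p : Fin n × Fin d, ((p.1:ℕ) = (k:ℕ) ∨ (p.1:ℕ) + 1 = (k:ℕ)) → a p = b p) →
    ∀ q : Fin d, F t a (k, q) = F t b (k, q)

lemma IsSubdiagonalCascade.timeReversal (hF : IsSubdiagonalCascade F) :
    IsSubdiagonalCascade fun v => -F (-v) := by
  intro t a b k hab q
  simp only [Pi.neg_apply, PiLp.neg_apply, hF (-t) a b k hab q]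

lemma hasDerivAt_timeReversal {γ : ℝ → EuclideanSpace ℝ (Fin n × Fin d)}
    (hγ : ∀ u, HasDerivAt γ (F u (γ u)) u) (v : ℝ) :
    HasDerivAt (fun v => γ (-v)) (-F (-v) (γ (-v))) v := by
  have h := (hγ (-v)).scomp v (hasDerivAt_neg v)
  rw [neg_one_smul] at h
  exact h

lemma IsSubdiagonalCascade.blockNorm_sub_le_sum_cascadeNbhd (hF : IsSubdiagonalCascade F) {t : ℝ}
    (hLip : LipschitzWith κ (F t)) (a b : EuclideanSpace ℝ (Fin n × Fin d)) (k : Fin n) :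
    blockNorm n d (F t a - F t b) k ≤ κ * ∑ j ∈ cascadeNbhd k, blockNorm n d (a - b) j := by
  classical
  set w : Fin n → ℝ := fun j => if j ∈ cascadeNbhd k then 1 else 0
  set a' := b + blockScale w (a - b)
  have hsame : ∀ q, F t a (k, q) = F t a' (k, q) :=
    hF t a a' k fun p hp => by simp [a', w, cascadeNbhd, hp]
  calc blockNorm n d (F t a - F t b) k = blockNorm n d (F t a' - F t b) k := by
        simp only [blockNorm, PiLp.sub_apply, hsame]
    _ ≤ ‖F t a' - F t b‖ := blockNorm_le_norm _ _
    _ ≤ κ * ‖a' - b‖ := by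
        rw [← dist_eq_norm, ← dist_eq_norm]
        exact hLip.dist_le_mul a' b
    _ ≤ κ * ∑ j, blockNorm n d (a' - b) j := by gcongr; exact norm_le_sum_blockNorm _
    _ = κ * ∑ j ∈ cascadeNbhd k, blockNorm n d (a - b) j := by
        simp only [a', add_sub_cancel_left, blockNorm_blockScale, w, apply_ite abs, abs_one,
          abs_zero, ite_mul, one_mul, zero_mul, sum_ite_mem, univ_inter]

lemma IsSubdiagonalCascade.norm_blockScale_sub_le (hF : IsSubdiagonalCascade F) {t : ℝ}
    (hLip : LipschitzWith κ (F t)) {w : Fin n → ℝ} {c : ℝ} (hw0 : ∀ k, 0 ≤ w k) (hc : 0 ≤ c)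
    (hw : ∀ j k : Fin n, (j : ℕ) + 1 = k → w k ≤ c * w j)
    (a b : EuclideanSpace ℝ (Fin n × Fin d)) :
    ‖blockScale w (F t a - F t b)‖ ≤ n ^ 2 * κ * (1 + c) * ‖blockScale w (a - b)‖ := by
  set N := ‖blockScale w (a - b)‖
  have hnbhd : ∀ k, ∀ j ∈ cascadeNbhd k, w k * blockNorm n d (a - b) j ≤ (1 + c) * N := by
    intro k j hj
    have hwj : w k ≤ (1 + c) * w j := by
      rcases (mem_filter.1 hj).2 with h | h
      · rw [Fin.ext h]
        nlinarith [hw0 k]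
      · nlinarith [hw j k h, hw0 j]
    calc w k * blockNorm n d (a - b) j ≤ (1 + c) * (w j * blockNorm n d (a - b) j) := by
          rw [← mul_assoc]; gcongr; exact blockNorm_nonneg _ _
      _ = (1 + c) * blockNorm n d (blockScale w (a - b)) j := by
          rw [blockNorm_blockScale, abs_of_nonneg (hw0 j)]
      _ ≤ (1 + c) * N := mul_le_mul_of_nonneg_left (blockNorm_le_norm _ _) (by linarith)
  have hblock : ∀ k, blockNorm n d (blockScale w (F t a - F t b)) k ≤ κ * (n * ((1 + c) * N)) := by
    intro k
    rw [blockNorm_blockScale, abs_of_nonneg (hw0 k)]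
    calc w k * blockNorm n d (F t a - F t b) k
        ≤ w k * (κ * ∑ j ∈ cascadeNbhd k, blockNorm n d (a - b) j) :=
          mul_le_mul_of_nonneg_left (hF.blockNorm_sub_le_sum_cascadeNbhd hLip a b k) (hw0 k)
      _ = κ * ∑ j ∈ cascadeNbhd k, w k * blockNorm n d (a - b) j := by
          rw [mul_sum, mul_sum, mul_sum]; simp only [mul_left_comm]
      _ ≤ κ * ∑ j ∈ cascadeNbhd k, (1 + c) * N :=
          mul_le_mul_of_nonneg_left (sum_le_sum (hnbhd k)) κ.2
      _ ≤ κ * (n * ((1 + c) * N)) := by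
          rw [sum_const, nsmul_eq_mul]
          have hcard : ((cascadeNbhd k).card : ℝ) ≤ n := by
            exact_mod_cast (card_le_univ _).trans_eq (Fintype.card_fin n)
          have hN : 0 ≤ (1 + c) * N := by positivity
          gcongr
  calc ‖blockScale w (F t a - F t b)‖
      ≤ ∑ k, blockNorm n d (blockScale w (F t a - F t b)) k := norm_le_sum_blockNorm _
    _ ≤ ∑ _k : Fin n, κ * (n * ((1 + c) * N)) := sum_le_sum fun k _ => hblock k
    _ = n ^ 2 * κ * (1 + c) * N := by
        rw [sum_const, card_univ, Fintype.card_fin, nsmul_eq_mul]; ring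

variable {γ₁ γ₂ : ℝ → EuclideanSpace ℝ (Fin n × Fin d)}

lemma IsSubdiagonalCascade.norm_blockScale_sub_le_of_le (hF : IsSubdiagonalCascade F)
    (hLip : ∀ t, LipschitzWith κ (F t)) {w : Fin n → ℝ} {c : ℝ} (hw0 : ∀ k, 0 ≤ w k)
    (hc : 0 ≤ c) (hw : ∀ j k : Fin n, (j : ℕ) + 1 = k → w k ≤ c * w j)
    (hγ₁ : ∀ u, HasDerivAt γ₁ (F u (γ₁ u)) u) (hγ₂ : ∀ u, HasDerivAt γ₂ (F u (γ₂ u)) u)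
    {t u : ℝ} (htu : t ≤ u) :
    ‖blockScale w (γ₁ u - γ₂ u)‖ ≤
      ‖blockScale w (γ₁ t - γ₂ t)‖ * Real.exp (n ^ 2 * κ * (1 + c) * (u - t)) := by
  have hderiv : ∀ v, HasDerivAt (fun v => blockScale w (γ₁ v - γ₂ v))
      (blockScale w (F v (γ₁ v) - F v (γ₂ v))) v := fun v =>
    (blockScale w).hasFDerivAt.comp_hasDerivAt v ((hγ₁ v).sub (hγ₂ v))
  have h := norm_le_gronwallBound_of_norm_deriv_right_le
    (fun v _ => (hderiv v).continuousAt.continuousWithinAt)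
    (fun v _ => (hderiv v).hasDerivWithinAt) le_rfl
    (fun v _ => (hF.norm_blockScale_sub_le (hLip v) hw0 hc hw _ _).trans_eq (add_zero _).symm)
    u ⟨htu, le_rfl⟩
  rwa [gronwallBound_ε0] at h

end Cascade

section Weights

variable {n : ℕ}

noncomputable def cascadeWeight (i : Fin n) (h : ℝ) (k : Fin n) : ℝ :=
  if k ≤ i then h ^ ((i : ℕ) - k) else 0

lemma cascadeWeight_nonneg (i : Fin n) {h : ℝ} (hh : 0 ≤ h) (k : Fin n) :
    0 ≤ cascadeWeight i h k := by
  unfold cascadeWeight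
  split_ifs <;> positivity

@[simp] lemma cascadeWeight_self (i : Fin n) (h : ℝ) : cascadeWeight i h i = 1 := by
  simp [cascadeWeight]

lemma blockNorm_le_norm_blockScale_cascadeWeight {d : ℕ} (i : Fin n) (h : ℝ)
    (z : EuclideanSpace ℝ (Fin n × Fin d)) :
    blockNorm n d z i ≤ ‖blockScale (cascadeWeight i h) z‖ := by
  have hle := blockNorm_le_norm (blockScale (cascadeWeight i h) z) i
  rwa [blockNorm_blockScale, cascadeWeight_self, abs_one, one_mul] at hle

lemma cascadeWeight_le_inv_mul (i : Fin n) {h : ℝ} (hh : 0 < h) {j k : Fin n}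
    (hjk : (j : ℕ) + 1 = k) : cascadeWeight i h k ≤ h⁻¹ * cascadeWeight i h j := by
  unfold cascadeWeight
  split_ifs with hki hji hji
  · rw [show (i : ℕ) - j = (i - k) + 1 by rw [Fin.le_def] at hki; omega, pow_succ,
      mul_comm, mul_inv_cancel_right₀ hh.ne']
  · exact absurd (Fin.le_def.2 (by rw [Fin.le_def] at hki; omega)) hji
  · positivity
  · simp

end Weights

section Estimate

variable {n d : ℕ} {κ : NNReal}
  {F : ℝ → EuclideanSpace ℝ (Fin n × Fin d) → EuclideanSpace ℝ (Fin n × Fin d)}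
  {γ₁ γ₂ : ℝ → EuclideanSpace ℝ (Fin n × Fin d)}

lemma IsSubdiagonalCascade.blockNorm_sub_le_of_le (hF : IsSubdiagonalCascade F)
    (hLip : ∀ t, LipschitzWith κ (F t))
    (hγ₁ : ∀ u, HasDerivAt γ₁ (F u (γ₁ u)) u) (hγ₂ : ∀ u, HasDerivAt γ₂ (F u (γ₂ u)) u)
    {t u : ℝ} (htu : t ≤ u) (i : Fin n) :
    blockNorm n d (γ₁ u - γ₂ u) i ≤ Real.exp (n ^ 2 * κ * (u - t + 1)) *
      ∑ k, cascadeWeight i (u - t) k * blockNorm n d (γ₁ t - γ₂ t) k := by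
  set W := blockScale (n := n) (d := d) (cascadeWeight i (u - t))
  have hgrowth : ‖W (γ₁ u - γ₂ u)‖ ≤ ‖W (γ₁ t - γ₂ t)‖ * Real.exp (n ^ 2 * κ * (u - t + 1)) := by
    rcases htu.eq_or_lt with rfl | hlt
    · exact le_mul_of_one_le_right (norm_nonneg _)
        (Real.one_le_exp (by rw [sub_self]; positivity))
    · have hh : 0 < u - t := sub_pos.2 hlt
      have hexp : (n : ℝ) ^ 2 * κ * (1 + (u - t)⁻¹) * (u - t) = n ^ 2 * κ * (u - t + 1) := by
        field_simp
      rw [← hexp]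
      exact hF.norm_blockScale_sub_le_of_le hLip (cascadeWeight_nonneg i hh.le)
        (inv_nonneg.2 hh.le) (fun _ _ => cascadeWeight_le_inv_mul i hh) hγ₁ hγ₂ htu
  calc blockNorm n d (γ₁ u - γ₂ u) i ≤ ‖W (γ₁ u - γ₂ u)‖ :=
        blockNorm_le_norm_blockScale_cascadeWeight i _ _
    _ ≤ ‖W (γ₁ t - γ₂ t)‖ * Real.exp (n ^ 2 * κ * (u - t + 1)) := hgrowth
    _ ≤ _ := by
        rw [mul_comm]
        exact mul_le_mul_of_nonneg_left
          (norm_blockScale_le (cascadeWeight_nonneg i (sub_nonneg.2 htu)) _) (Real.exp_nonneg _)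

lemma IsSubdiagonalCascade.blockNorm_sub_le (hF : IsSubdiagonalCascade F)
    (hLip : ∀ t, LipschitzWith κ (F t))
    (hγ₁ : ∀ u, HasDerivAt γ₁ (F u (γ₁ u)) u) (hγ₂ : ∀ u, HasDerivAt γ₂ (F u (γ₂ u)) u)
    (t u : ℝ) (i : Fin n) :
    blockNorm n d (γ₁ u - γ₂ u) i ≤ Real.exp (n ^ 2 * κ * (|u - t| + 1)) *
      ∑ k, cascadeWeight i |u - t| k * blockNorm n d (γ₁ t - γ₂ t) k := by
  rcases le_total t u with htu | hut
  · rw [abs_of_nonneg (sub_nonneg.2 htu)]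
    exact hF.blockNorm_sub_le_of_le hLip hγ₁ hγ₂ htu i
  · have h := hF.timeReversal.blockNorm_sub_le_of_le (fun v => (hLip (-v)).neg)
      (hasDerivAt_timeReversal hγ₁) (hasDerivAt_timeReversal hγ₂) (neg_le_neg hut) i
    rw [abs_of_nonpos (sub_nonpos.2 hut), neg_sub]
    simpa only [neg_neg, neg_sub_neg] using h

end Estimate

lemma Real.rpow_one_div_le_mul_of_le_mul_pow {x M r : ℝ} {m : ℕ} (hx : 0 ≤ x) (hM : 1 ≤ M)
    (hr : 0 ≤ r) (hm : m ≠ 0) (h : x ≤ M * r ^ m) : x ^ ((1 : ℝ) / m) ≤ M * r := by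
  have hM0 : 0 ≤ M := zero_le_one.trans hM
  calc x ^ ((1 : ℝ) / m) ≤ (M * r ^ m) ^ ((1 : ℝ) / m) := by gcongr
    _ = M ^ ((1 : ℝ) / m) * r := by
        rw [Real.mul_rpow hM0 (pow_nonneg hr m), one_div, Real.pow_rpow_inv_natCast hr hm]
    _ ≤ M * r := by
        gcongr
        exact Real.rpow_le_self_of_one_le hM
          (div_le_one_of_le₀ (by exact_mod_cast Nat.one_le_iff_ne_zero.2 hm) (Nat.cast_nonneg m))

section Rho

variable {n d : ℕ}

lemma rho_nonneg (u : ℝ) (z : EuclideanSpace ℝ (Fin n × Fin d)) : 0 ≤ rho n d u z :=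
  add_nonneg (Real.rpow_nonneg (abs_nonneg u) _)
    (sum_nonneg fun k _ => Real.rpow_nonneg (blockNorm_nonneg z k) _)

lemma rho_sub_comm (a b : ℝ) (z : EuclideanSpace ℝ (Fin n × Fin d)) :
    rho n d (a - b) z = rho n d (b - a) z := by
  rw [rho, rho, abs_sub_comm]

lemma abs_le_rho_sq (u : ℝ) (z : EuclideanSpace ℝ (Fin n × Fin d)) : |u| ≤ rho n d u z ^ 2 := by
  have h : |u| ^ ((1 : ℝ) / 2) ≤ rho n d u z :=
    le_add_of_nonneg_right (sum_nonneg fun k _ => Real.rpow_nonneg (blockNorm_nonneg z k) _)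
  rw [← Real.sqrt_eq_rpow] at h
  calc |u| = √|u| ^ 2 := (Real.sq_sqrt (abs_nonneg u)).symm
    _ ≤ rho n d u z ^ 2 := by gcongr

lemma blockNorm_le_rho_pow (u : ℝ) (z : EuclideanSpace ℝ (Fin n × Fin d)) (k : Fin n) :
    blockNorm n d z k ≤ rho n d u z ^ (2 * (k : ℕ) + 1) := by
  have h : blockNorm n d z k ^ ((1 : ℝ) / (2 * (k : ℕ) + 1)) ≤ rho n d u z :=
    le_add_of_nonneg_of_le (Real.rpow_nonneg (abs_nonneg u) _)
      (single_le_sum (f := fun k => blockNorm n d z k ^ ((1 : ℝ) / (2 * (k : ℕ) + 1)))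
        (fun k _ => Real.rpow_nonneg (blockNorm_nonneg z k) _) (mem_univ k))
  have hcast : (1 : ℝ) / (2 * (k : ℕ) + 1) = ((2 * (k : ℕ) + 1 : ℕ) : ℝ)⁻¹ := by
    push_cast; rw [one_div]
  rw [hcast] at h
  calc blockNorm n d z k
      = (blockNorm n d z k ^ ((2 * (k : ℕ) + 1 : ℕ) : ℝ)⁻¹) ^ (2 * (k : ℕ) + 1) :=
        (Real.rpow_inv_natCast_pow (blockNorm_nonneg z k) (Nat.succ_ne_zero _)).symm
    _ ≤ rho n d u z ^ (2 * (k : ℕ) + 1) := by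
        gcongr
        exact Real.rpow_nonneg (blockNorm_nonneg z k) _

lemma cascadeWeight_abs_mul_blockNorm_le (u : ℝ) (z : EuclideanSpace ℝ (Fin n × Fin d))
    (i k : Fin n) :
    cascadeWeight i |u| k * blockNorm n d z k ≤ rho n d u z ^ (2 * (i : ℕ) + 1) := by
  unfold cascadeWeight
  split_ifs with hki
  · rw [Fin.le_def] at hki
    calc |u| ^ ((i : ℕ) - k) * blockNorm n d z k
        ≤ (rho n d u z ^ 2) ^ ((i : ℕ) - k) * rho n d u z ^ (2 * (k : ℕ) + 1) := by
          gcongr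
          · exact blockNorm_nonneg z k
          · exact abs_le_rho_sq u z
          · exact blockNorm_le_rho_pow u z k
      _ = rho n d u z ^ (2 * (i : ℕ) + 1) := by
          rw [← pow_mul, ← pow_add]; congr 1; omega
  · rw [zero_mul]
    exact pow_nonneg (rho_nonneg u z) _

lemma rho_le_of_blockNorm_le {u : ℝ} {z z' : EuclideanSpace ℝ (Fin n × Fin d)} {M : ℝ}
    (hM : 1 ≤ M) (h : ∀ i : Fin n, blockNorm n d z' i ≤ M * rho n d u z ^ (2 * (i : ℕ) + 1)) :
    rho n d u z' ≤ (1 + n * M) * rho n d u z := by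
  have hblock : ∀ i : Fin n,
      blockNorm n d z' i ^ ((1 : ℝ) / (2 * (i : ℕ) + 1)) ≤ M * rho n d u z := by
    intro i
    have := Real.rpow_one_div_le_mul_of_le_mul_pow (blockNorm_nonneg z' i) hM
      (rho_nonneg u z) (Nat.succ_ne_zero _) (h i)
    exact_mod_cast this
  calc rho n d u z' ≤ rho n d u z + ∑ _i : Fin n, M * rho n d u z := by
        rw [rho]
        gcongr with i
        · exact le_add_of_nonneg_right
            (sum_nonneg fun k _ => Real.rpow_nonneg (blockNorm_nonneg z k) _)
        · exact hblock i
    _ = (1 + n * M) * rho n d u z := by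
        rw [sum_const, card_univ, Fintype.card_fin, nsmul_eq_mul]; ring

end Rho

lemma IsSubdiagonalCascade.rho_sub_le {n d : ℕ} {κ : NNReal}
    {F : ℝ → EuclideanSpace ℝ (Fin n × Fin d) → EuclideanSpace ℝ (Fin n × Fin d)}
    {γ₁ γ₂ : ℝ → EuclideanSpace ℝ (Fin n × Fin d)} (hF : IsSubdiagonalCascade F) (hn : 1 ≤ n)
    (hLip : ∀ t, LipschitzWith κ (F t))
    (hγ₁ : ∀ u, HasDerivAt γ₁ (F u (γ₁ u)) u) (hγ₂ : ∀ u, HasDerivAt γ₂ (F u (γ₂ u)) u)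
    {R t u : ℝ} (htu : |u - t| ≤ R) :
    rho n d (u - t) (γ₁ u - γ₂ u) ≤
      (1 + n * (n * Real.exp (n ^ 2 * κ * (R + 1)))) * rho n d (u - t) (γ₁ t - γ₂ t) := by
  have hR : 0 ≤ R := (abs_nonneg _).trans htu
  refine rho_le_of_blockNorm_le
    (one_le_mul_of_one_le_of_one_le (by exact_mod_cast hn) (Real.one_le_exp (by positivity)))
    fun i => ?_
  set ρ := rho n d (u - t) (γ₁ t - γ₂ t)
  calc blockNorm n d (γ₁ u - γ₂ u) i
      ≤ Real.exp (n ^ 2 * κ * (|u - t| + 1)) *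
          ∑ k, cascadeWeight i |u - t| k * blockNorm n d (γ₁ t - γ₂ t) k :=
        hF.blockNorm_sub_le hLip hγ₁ hγ₂ t u i
    _ ≤ Real.exp (n ^ 2 * κ * (R + 1)) * ∑ _k : Fin n, ρ ^ (2 * (i : ℕ) + 1) := by
        gcongr with k
        · exact sum_nonneg fun k _ => mul_nonneg (cascadeWeight_nonneg i (abs_nonneg _) k)
            (blockNorm_nonneg _ _)
        · exact cascadeWeight_abs_mul_blockNorm_le _ _ i k
    _ = n * Real.exp (n ^ 2 * κ * (R + 1)) * ρ ^ (2 * (i : ℕ) + 1) := by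
        rw [sum_const, card_univ, Fintype.card_fin, nsmul_eq_mul]; ring

theorem stmt_18_general (n d : ℕ) (hn : 1 ≤ n) (T : ℝ) (κ : NNReal)
    (F : ℝ → EuclideanSpace ℝ (Fin n × Fin d) → EuclideanSpace ℝ (Fin n × Fin d))
    (hLip : ∀ t, LipschitzWith κ (F t))
    (hcasc : ∀ (t : ℝ) (a b : EuclideanSpace ℝ (Fin n × Fin d)) (k : Fin n),
      (∀ p : Fin n × Fin d, ((p.1:ℕ) = (k:ℕ) ∨ (p.1:ℕ) + 1 = (k:ℕ)) → a p = b p) →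
      ∀ q : Fin d, F t a (k, q) = F t b (k, q))
    (θ : ℝ → ℝ → EuclideanSpace ℝ (Fin n × Fin d) → EuclideanSpace ℝ (Fin n × Fin d))
    (hflow0 : ∀ s x, θ s s x = x)
    (hflow : ∀ s x t, HasDerivAt (fun u => θ u s x) (F t (θ t s x)) t) :
    ∃ C : ℝ, 1 ≤ C ∧ ∀ s t : ℝ, s ∈ Set.Icc (-T) T → t ∈ Set.Icc (-T) T →
      ∀ x y : EuclideanSpace ℝ (Fin n × Fin d),
      C⁻¹ * rho n d (t - s) (x - θ s t y) ≤ rho n d (t - s) (θ t s x - y) ∧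
      rho n d (t - s) (θ t s x - y) ≤ C * rho n d (t - s) (x - θ s t y) := by
  have hF : IsSubdiagonalCascade F := hcasc
  set C := 1 + n * (n * Real.exp (n ^ 2 * κ * (2 * T + 1)))
  have hC : 1 ≤ C := le_add_of_nonneg_right (by positivity)
  refine ⟨C, hC, fun s t hs ht x y => ?_⟩
  have hst : |s - t| ≤ 2 * T :=
    abs_sub_le_iff.2 ⟨by linarith [hs.2, ht.1], by linarith [hs.1, ht.2]⟩
  have h₁ := hF.rho_sub_le hn hLip (hflow s x) (hflow t y) hst
  have h₂ := hF.rho_sub_le hn hLip (hflow s x) (hflow t y) ((abs_sub_comm t s).trans_le hst)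
  rw [hflow0, hflow0, rho_sub_comm, rho_sub_comm s] at h₁
  rw [hflow0, hflow0] at h₂
  exact ⟨(inv_mul_le_iff₀ (by linarith)).2 h₁, h₂⟩

/-- Global equivalence of the forward quasi-distance d((s,x),(t,y)) = ρ(t−s, θ_{t,s}(x)−y)
and the backward quasi-distance d*((s,x),(t,y)) = ρ(t−s, x−θ_{s,t}(y)), when the Lipschitz
vector field F has the strict subdiagonal cascade structure: block k of F depends only on
blocks k−1 and k (and block 0 only on block 0). -/
theorem stmt_18 (n d : ℕ) (hn : 1 ≤ n) (T : ℝ) (hT : 0 < T) (κ : NNReal)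
    (F : ℝ → EuclideanSpace ℝ (Fin n × Fin d) → EuclideanSpace ℝ (Fin n × Fin d))
    (hLip : ∀ t, LipschitzWith κ (F t))
    (hcasc : ∀ (t : ℝ) (a b : EuclideanSpace ℝ (Fin n × Fin d)) (k : Fin n),
      (∀ p : Fin n × Fin d, ((p.1:ℕ) = (k:ℕ) ∨ (p.1:ℕ) + 1 = (k:ℕ)) → a p = b p) →
      ∀ q : Fin d, F t a (k, q) = F t b (k, q))
    (θ : ℝ → ℝ → EuclideanSpace ℝ (Fin n × Fin d) → EuclideanSpace ℝ (Fin n × Fin d))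
    (hflow0 : ∀ s x, θ s s x = x)
    (hflow : ∀ s x t, HasDerivAt (fun u => θ u s x) (F t (θ t s x)) t) :
    ∃ C : ℝ, 1 ≤ C ∧ ∀ s t : ℝ, s ∈ Set.Icc (-T) T → t ∈ Set.Icc (-T) T →
      ∀ x y : EuclideanSpace ℝ (Fin n × Fin d),
      C⁻¹ * rho n d (t - s) (x - θ s t y) ≤ rho n d (t - s) (θ t s x - y) ∧
      rho n d (t - s) (θ t s x - y) ≤ C * rho n d (t - s) (x - θ s t y) :=
  stmt_18_general n d hn T κ F hLip hcasc θ hflow0 hflow
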